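/- Let (a_0, …, a_{f−1}) be a tame signature for a prime p and integer f ≥ 1, and set n_i = ∑_{j=0}^{f−1} a_{i+j} p^j for i ∈ ℤ. Then: (i) n_0 ≡ n_i p^i (mod p^f − 1) for all i; (ii) if a_i ≠ p, then (p^f − 1)/(p − 1) ≤ n_i < p(p^f − 1)/(p − 1); (iii) if j is such that a_j ≠ p−1 and (a_i, a_{i+1}, …, a_{j−1}) = (p, p−1, …, p−1) for some i with j − f ≤ i < j, then p^f − 1 < n_j < p(p^f − 1)/(p − 1). -/

import Mathlib

/-!
Everything rests on the recursion `p * n_{i+1} = n_i + a_i (p^f - 1)`, which says that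
`n_{i+1}` is obtained from `n_i` by a cyclic shift of its digits.
Iterating it gives the congruence (i). For (ii), comparing the digits `a_{i+j}` with `1` and
with `p` (the latter strictly at some digit, as the signature is not constantly `p`) bounds
`n_i` by geometric sums. For (iii), the digit `a_i = p` forces `n_{i+1} > p^f - 1`, and the
recursion propagates this bound across each following digit `p - 1`.
-/

open scoped Classical

/-- `a : ℤ → ℕ` represents a tame signature `(a_0, …, a_{f−1}) ∈ {1,…,p}^f` (not all
entries equal to `p`), with the indices extended to all of `ℤ` by `f`-periodicity. -/
def IsTameSignature (p f : ℕ) (a : ℤ → ℕ) : Prop :=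
  0 < f ∧ (∀ j : ℤ, a (j + f) = a j) ∧ (∀ j : ℤ, 1 ≤ a j ∧ a j ≤ p) ∧ ∃ j : ℤ, a j ≠ p

def sigN (p f : ℕ) (a : ℤ → ℕ) (i : ℤ) : ℤ :=
  ∑ j ∈ Finset.range f, (a (i + j) : ℤ) * (p : ℤ) ^ j

open Finset

section

variable {p f : ℕ} {a : ℤ → ℕ}

theorem IsTameSignature.periodic (hsig : IsTameSignature p f a) : Function.Periodic a f :=
  hsig.2.1

theorem IsTameSignature.one_le_apply (hsig : IsTameSignature p f a) (j : ℤ) : 1 ≤ a j :=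
  (hsig.2.2.1 j).1

theorem IsTameSignature.apply_le (hsig : IsTameSignature p f a) (j : ℤ) : a j ≤ p :=
  (hsig.2.2.1 j).2

theorem IsTameSignature.two_le (hsig : IsTameSignature p f a) : 2 ≤ p := by
  obtain ⟨j, hj⟩ := hsig.2.2.2
  have := hsig.one_le_apply j
  have := hsig.apply_le j
  omega

theorem IsTameSignature.exists_apply_lt (hsig : IsTameSignature p f a) (i : ℤ) :
    ∃ t < f, a (i + t) < p := by
  obtain ⟨j, hj⟩ := hsig.2.2.2
  have hf : (0 : ℤ) < f := by exact_mod_cast hsig.1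
  have hrem := Int.toNat_of_nonneg (Int.emod_nonneg (j - i) hf.ne')
  refine ⟨((j - i) % f).toNat, by have := Int.emod_lt_of_pos (j - i) hf; omega, ?_⟩
  have hshift : i + ((j - i) % f).toNat = j - (j - i) / f * f := by
    rw [hrem, Int.emod_def]; ring
  have hper := hsig.periodic.sub_int_mul_eq (x := j) ((j - i) / f)
  rw [Int.cast_id] at hper
  rw [hshift, hper]
  exact lt_of_le_of_ne (hsig.apply_le j) hj

theorem sigN_succ (hper : Function.Periodic a f) (i : ℤ) :
    (p : ℤ) * sigN p f a (i + 1) = sigN p f a i + a i * ((p : ℤ) ^ f - 1) := by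
  have h := (sum_range_succ' (fun j : ℕ ↦ (a (i + j) : ℤ) * (p : ℤ) ^ j) f).symm.trans
    (sum_range_succ (fun j : ℕ ↦ (a (i + j) : ℤ) * (p : ℤ) ^ j) f)
  simp only [Nat.cast_add, Nat.cast_one, Nat.cast_zero, add_zero, pow_zero, mul_one,
    hper i] at h
  have hshift : ∑ j ∈ range f, (p : ℤ) * ((a (i + 1 + j) : ℤ) * (p : ℤ) ^ j) =
      ∑ j ∈ range f, (a (i + (j + 1)) : ℤ) * (p : ℤ) ^ (j + 1) :=
    sum_congr rfl fun j _ ↦ by rw [add_right_comm, add_assoc]; ring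
  rw [sigN, sigN, mul_sum, hshift]
  linear_combination h

theorem sigN_mul_pow_sub_dvd (hper : Function.Periodic a f) (i : ℕ) :
    ((p : ℤ) ^ f - 1) ∣ sigN p f a i * (p : ℤ) ^ i - sigN p f a 0 := by
  induction i with
  | zero => simp
  | succ k ih =>
    have hstep : sigN p f a ↑(k + 1) * (p : ℤ) ^ (k + 1) - sigN p f a 0 =
        (sigN p f a k * (p : ℤ) ^ k - sigN p f a 0) +
          (p : ℤ) ^ k * a k * ((p : ℤ) ^ f - 1) := by
      push_cast
      linear_combination (p : ℤ) ^ k * sigN_succ hper k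
    rw [hstep]
    exact dvd_add ih (dvd_mul_left _ _)

theorem sigN_pos (hf : 0 < f) (hp : 0 < p) (hone : ∀ j, 1 ≤ a j) (i : ℤ) :
    0 < sigN p f a i :=
  sum_pos (fun j _ ↦ mul_pos (by exact_mod_cast hone _) (by positivity))
    (nonempty_range_iff.2 hf.ne')

theorem geom_sum_le_sigN (hone : ∀ j, 1 ≤ a j) (i : ℤ) :
    ∑ j ∈ range f, (p : ℤ) ^ j ≤ sigN p f a i :=
  sum_le_sum fun j _ ↦ le_mul_of_one_le_left (by positivity) (by exact_mod_cast hone _)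

theorem sigN_lt_mul_geom_sum (hle : ∀ j, a j ≤ p) {i : ℤ} {t : ℕ} (ht : t < f)
    (hlt : a (i + t) < p) : sigN p f a i < p * ∑ j ∈ range f, (p : ℤ) ^ j := by
  have hp : (0 : ℤ) < p := by omega
  rw [mul_sum]
  refine sum_lt_sum (fun j _ ↦ ?_) ⟨t, mem_range.2 ht, ?_⟩
  · exact mul_le_mul_of_nonneg_right (by exact_mod_cast hle _) (by positivity)
  · exact mul_lt_mul_of_pos_right (by exact_mod_cast hlt) (by positivity)

theorem sub_one_le_sub_one_mul_sigN (hp : 1 ≤ p) (hone : ∀ j, 1 ≤ a j) (i : ℤ) :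
    (p : ℤ) ^ f - 1 ≤ ((p : ℤ) - 1) * sigN p f a i := by
  rw [← geom_sum_mul, mul_comm]
  exact mul_le_mul_of_nonneg_left (geom_sum_le_sigN hone i) (by omega)

theorem sub_one_lt_sigN_succ (hper : Function.Periodic a f) (hp : 0 < p) {m : ℤ}
    (h : (p : ℤ) * ((p : ℤ) ^ f - 1) < sigN p f a m + a m * ((p : ℤ) ^ f - 1)) :
    (p : ℤ) ^ f - 1 < sigN p f a (m + 1) := by
  rw [← sigN_succ hper] at h
  exact lt_of_mul_lt_mul_left h (by positivity)

theorem IsTameSignature.sub_one_mul_sigN_lt (hsig : IsTameSignature p f a) (i : ℤ) :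
    ((p : ℤ) - 1) * sigN p f a i < p * ((p : ℤ) ^ f - 1) := by
  obtain ⟨t, ht, hlt⟩ := hsig.exists_apply_lt i
  have hp : (1 : ℤ) < p := by have := hsig.two_le; omega
  have := mul_lt_mul_of_pos_left (sigN_lt_mul_geom_sum hsig.apply_le ht hlt) (sub_pos.2 hp)
  rw [← geom_sum_mul]
  linarith

theorem IsTameSignature.sub_one_lt_sigN_of_carry (hsig : IsTameSignature p f a) {i j : ℤ}
    (hij : i < j) (hai : a i = p) (hmid : ∀ m, i < m → m < j → a m = p - 1) :
    (p : ℤ) ^ f - 1 < sigN p f a j := by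
  have hp := hsig.two_le
  have hp0 : 0 < p := by omega
  have hcarry : ∀ m, i + 1 ≤ m → m ≤ j → (p : ℤ) ^ f - 1 < sigN p f a m := by
    intro m hm
    induction m, hm using Int.leInduction with
    | base =>
      refine fun _ ↦ sub_one_lt_sigN_succ hsig.periodic hp0 ?_
      have := sigN_pos hsig.1 hp0 hsig.one_le_apply i
      rw [hai]
      linarith
    | succ m hm ih =>
      refine fun hmj ↦ sub_one_lt_sigN_succ hsig.periodic hp0 ?_
      have := ih (by omega)
      rw [hmid m (by omega) (by omega), Nat.cast_sub (by omega), Nat.cast_one]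
      linarith
  exact hcarry j (by omega) le_rfl

end

theorem sigN_props_general (p f : ℕ) (a : ℤ → ℕ) (hsig : IsTameSignature p f a) :
    (∀ i : ℕ, ((p : ℤ) ^ f - 1) ∣ (sigN p f a i * (p : ℤ) ^ i - sigN p f a 0)) ∧
      (∀ i : ℤ, a i ≠ p →
        ((p : ℤ) ^ f - 1) ≤ ((p : ℤ) - 1) * sigN p f a i ∧
          ((p : ℤ) - 1) * sigN p f a i < (p : ℤ) * ((p : ℤ) ^ f - 1)) ∧
      (∀ j : ℤ, a j ≠ p - 1 →
        (∃ i : ℤ, j - (f : ℤ) ≤ i ∧ i < j ∧ a i = p ∧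
          ∀ m : ℤ, i < m → m < j → a m = p - 1) →
        ((p : ℤ) ^ f - 1) < sigN p f a j ∧
          ((p : ℤ) - 1) * sigN p f a j < (p : ℤ) * ((p : ℤ) ^ f - 1)) :=
  ⟨sigN_mul_pow_sub_dvd hsig.periodic,
    fun i _ ↦ ⟨sub_one_le_sub_one_mul_sigN (by have := hsig.two_le; omega) hsig.one_le_apply i,
      hsig.sub_one_mul_sigN_lt i⟩,
    fun j _ ⟨_, _, hij, hai, hmid⟩ ↦
      ⟨hsig.sub_one_lt_sigN_of_carry hij hai hmid, hsig.sub_one_mul_sigN_lt j⟩⟩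

/-- Let `(a_0,…,a_{f−1})` be a tame signature and `n_i = ∑_{j=0}^{f−1} a_{i+j} p^j`.
Then: (i) `n_0 ≡ n_i p^i (mod p^f − 1)` for all `i ≥ 0`;
(ii) if `a_i ≠ p` then `(p^f−1)/(p−1) ≤ n_i < p(p^f−1)/(p−1)` (stated multiplied
through by `p − 1`);
(iii) if `a_j ≠ p−1` and `(a_i, …, a_{j−1}) = (p, p−1, …, p−1)` for some
`j − f ≤ i < j`, then `p^f − 1 < n_j < p(p^f−1)/(p−1)`. -/
theorem sigN_props (p f : ℕ) (a : ℤ → ℕ) (hp : p.Prime)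
    (hsig : IsTameSignature p f a) :
    (∀ i : ℕ, ((p : ℤ) ^ f - 1) ∣ (sigN p f a i * (p : ℤ) ^ i - sigN p f a 0)) ∧
      (∀ i : ℤ, a i ≠ p →
        ((p : ℤ) ^ f - 1) ≤ ((p : ℤ) - 1) * sigN p f a i ∧
          ((p : ℤ) - 1) * sigN p f a i < (p : ℤ) * ((p : ℤ) ^ f - 1)) ∧
      (∀ j : ℤ, a j ≠ p - 1 →
        (∃ i : ℤ, j - (f : ℤ) ≤ i ∧ i < j ∧ a i = p ∧
          ∀ m : ℤ, i < m → m < j → a m = p - 1) →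
        ((p : ℤ) ^ f - 1) < sigN p f a j ∧
          ((p : ℤ) - 1) * sigN p f a j < (p : ℤ) * ((p : ℤ) ^ f - 1)) :=
  sigN_props_general p f a hsig
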